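/- Let A ∈ M_n(ℂ) be h-cyclic in consecutive block form with B_1 the cyclic product A_{12}A_{23}⋯A_{h1}. If λ is a nonzero eigenvalue of A, then λ^h is a nonzero eigenvalue of B_1; conversely, if μ is a nonzero eigenvalue of B_1 and λ^h = μ, then λ is an eigenvalue of A. In particular the nonzero spectrum of A is closed under multiplication by ω = exp(2πi/h). -/
import Mathlib

open Matrix

/-- `A` is `h`-cyclic with respect to the partition of indices given by the block-index
map `f` (vertex `x` lies in block `f x`): every nonzero entry goes from block `ℓ` to
block `ℓ + 1 (mod h)`. -/
def IsHCyclic {n h : ℕ} (A : Matrix (Fin n) (Fin n) ℂ) (f : Fin n → ZMod h) : Prop :=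
  ∀ i j, A i j ≠ 0 → f j = f i + 1

/-- The block `A_{ℓ,ℓ+1}` of `A`, zero-padded to full size: entries of `A` from block `ℓ`
to block `ℓ+1`, and `0` elsewhere. -/
noncomputable def blockM {n h : ℕ} (A : Matrix (Fin n) (Fin n) ℂ) (f : Fin n → ZMod h) (ℓ : ZMod h) :
    Matrix (Fin n) (Fin n) ℂ :=
  Matrix.of fun x y => if f x = ℓ ∧ f y = ℓ + 1 then A x y else 0

/-- The partial cyclic product `B_{ip} = A_{i-p,i-p+1} A_{i-p+1,i-p+2} ⋯ A_{i-1,i}`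
(indices mod `h`), i.e. `∏_{j=h+1-p}^{h} A_{α^{j-1}(i), α^{j}(i)}` where `α(i) = i+1 mod h`;
each factor is zero-padded to full size.  `B_i := B_{ih}` is the cyclic block product. -/
noncomputable def Bprod {n h : ℕ} (A : Matrix (Fin n) (Fin n) ℂ) (f : Fin n → ZMod h) (i : ZMod h)
    (p : ℕ) : Matrix (Fin n) (Fin n) ℂ :=
  ((List.range p).map fun j => blockM A f (i - (p : ZMod h) + (j : ZMod h))).prod

/-- `ω = exp(2πi/h)`, a primitive `h`-th root of unity. -/
noncomputable def primRoot (h : ℕ) : ℂ := Complex.exp (2 * Real.pi * Complex.I / h)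

/-- The cyclic block product `B_1 = A_{12}A_{23}⋯A_{h1}`, as a square matrix on the first
block (block `0`). -/
noncomputable def Bone {n h : ℕ} (A : Matrix (Fin n) (Fin n) ℂ) (f : Fin n → ZMod h) :
    Matrix {z : Fin n // f z = 0} {z : Fin n // f z = 0} ℂ :=
  Matrix.of fun a b => Bprod A f 0 h a.1 b.1

section Aux

variable {n h : ℕ} [NeZero h] (A : Matrix (Fin n) (Fin n) ℂ) (f : Fin n → ZMod h)

/-- Restriction of a vector to block `ℓ`. -/
noncomputable def Pmask (ℓ : ZMod h) (v : Fin n → ℂ) : Fin n → ℂ :=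
  fun x => if f x = ℓ then v x else 0

lemma Pmask_support {ℓ : ZMod h} {v : Fin n → ℂ} {x : Fin n} (hx : f x ≠ ℓ) :
    Pmask f ℓ v x = 0 := if_neg hx

lemma blockM_mulVec_support (ℓ : ZMod h) (v : Fin n → ℂ) {x : Fin n} (hx : f x ≠ ℓ) :
    (blockM A f ℓ *ᵥ v) x = 0 := by
  simp only [mulVec, dotProduct, blockM, Matrix.of_apply]
  apply Finset.sum_eq_zero
  intro y _
  rw [if_neg (fun hc => hx hc.1), zero_mul]

/-- If `v` is supported in block `m`, then `A *ᵥ v = A_{m-1,m} *ᵥ v`. -/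
lemma mulVec_eq_blockM (hA : IsHCyclic A f) (m : ZMod h) (v : Fin n → ℂ)
    (hv : ∀ x, f x ≠ m → v x = 0) :
    A *ᵥ v = blockM A f (m - 1) *ᵥ v := by
  funext x
  simp only [mulVec, dotProduct, blockM, Matrix.of_apply]
  apply Finset.sum_congr rfl
  intro y _
  by_cases hvy : v y = 0
  · rw [hvy, mul_zero, mul_zero]
  · have hfy : f y = m := by by_contra hc; exact hvy (hv y hc)
    by_cases hAxy : A x y = 0
    · rw [hAxy]; split <;> simp
    · have hfx : f x = m - 1 := by
        have h1 := hA x y hAxy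
        rw [hfy] at h1
        rw [h1]; ring
      rw [if_pos ⟨hfx, by rw [sub_add_cancel]; exact hfy⟩]

lemma Bprod_eq (i : ZMod h) (p : ℕ) :
    Bprod A f i p
      = ((List.range p).map fun j : ℕ => blockM A f (i - (p : ZMod h) + ((j : ℕ) : ZMod h))).prod := by
  unfold Bprod
  rw [show (do let a ← List.range p; pure ((a : ZMod h)) : List (ZMod h))
      = (List.range p).map Nat.cast from List.flatMap_pure_eq_map _ _, List.map_map]
  rfl

lemma Bprod_succ (i : ZMod h) (p : ℕ) :
    Bprod A f i (p + 1) = blockM A f (i - ((p : ZMod h) + 1)) * Bprod A f i p := by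
  rw [Bprod_eq, Bprod_eq, List.range_succ_eq_map, List.map_cons, List.prod_cons, List.map_map]
  congr 2
  · push_cast; ring
  · apply List.map_congr_left
    intro j _
    simp only [Function.comp_apply]
    congr 1
    push_cast
    ring

lemma Bprod_zero (i : ZMod h) : Bprod A f i 0 = 1 := by
  simp [Bprod]

/-- Support of `Bprod *ᵥ` applied to a vector supported in block `i`. -/
lemma Bprod_mulVec_support (i : ZMod h) (v : Fin n → ℂ) (hv : ∀ x, f x ≠ i → v x = 0) :
    ∀ p : ℕ, ∀ x : Fin n, f x ≠ i - (p : ZMod h) → (Bprod A f i p *ᵥ v) x = 0 := by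
  intro p
  induction p with
  | zero =>
      intro x hx
      rw [Bprod_zero, one_mulVec]
      exact hv x (by simpa using hx)
  | succ p ih =>
      intro x hx
      rw [Bprod_succ, ← mulVec_mulVec]
      apply blockM_mulVec_support
      intro hc
      apply hx
      rw [hc]
      push_cast
      ring

end Aux

section Main

variable {n h : ℕ} [NeZero h] {A : Matrix (Fin n) (Fin n) ℂ} {f : Fin n → ZMod h}

/-- Key projection identity for an eigenvector. -/
lemma star_lemma (hA : IsHCyclic A f) {lam : ℂ} {v : Fin n → ℂ}
    (hAv : A *ᵥ v = lam • v) (ℓ : ZMod h) :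
    A *ᵥ Pmask f (ℓ + 1) v = lam • Pmask f ℓ v := by
  funext x
  simp only [mulVec, dotProduct, Pmask, Pi.smul_apply, smul_eq_mul]
  by_cases hx : f x = ℓ
  · rw [if_pos hx]
    have : ∑ y, A x y * (if f y = ℓ + 1 then v y else 0) = ∑ y, A x y * v y := by
      apply Finset.sum_congr rfl
      intro y _
      by_cases hy : f y = ℓ + 1
      · rw [if_pos hy]
      · by_cases hAxy : A x y = 0
        · rw [hAxy, zero_mul, zero_mul]
        · exact absurd (by rw [hA x y hAxy, hx]) hy
    rw [this]
    have := congrFun hAv x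
    simp only [mulVec, dotProduct, Pi.smul_apply, smul_eq_mul] at this
    exact this
  · rw [if_neg hx, mul_zero]
    apply Finset.sum_eq_zero
    intro y _
    by_cases hy : f y = ℓ + 1
    · by_cases hAxy : A x y = 0
      · rw [hAxy, zero_mul]
      · exact absurd (by have := hA x y hAxy; rw [this] at hy; exact add_right_cancel hy) hx
    · rw [if_neg hy, mul_zero]

/-- Forward iteration: `B_{0p} (P₀ v) = λ^p P_{-p} v`. -/
lemma Bprod_eigen (hA : IsHCyclic A f) {lam : ℂ} {v : Fin n → ℂ}
    (hAv : A *ᵥ v = lam • v) (p : ℕ) :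
    Bprod A f 0 p *ᵥ Pmask f 0 v = lam ^ p • Pmask f (0 - (p : ZMod h)) v := by
  induction p with
  | zero => simp [Bprod_zero]
  | succ p ih =>
      rw [Bprod_succ, ← mulVec_mulVec, ih, mulVec_smul]
      have hsupp : ∀ x, f x ≠ 0 - (p : ZMod h) → Pmask f (0 - (p : ZMod h)) v x = 0 :=
        fun x hx => Pmask_support f hx
      have h1 : blockM A f ((0 : ZMod h) - (p : ZMod h) - 1) *ᵥ Pmask f (0 - (p : ZMod h)) v
          = A *ᵥ Pmask f (0 - (p : ZMod h)) v :=
        (mulVec_eq_blockM A f hA _ _ hsupp).symm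
      have h2 : (0 : ZMod h) - (p : ZMod h) = ((0 : ZMod h) - (p : ZMod h) - 1) + 1 := by ring
      have h3 := star_lemma hA hAv ((0 : ZMod h) - (p : ZMod h) - 1)
      rw [← h2] at h3
      have hidx : (0 : ZMod h) - ((p : ZMod h) + 1) = (0 : ZMod h) - (p : ZMod h) - 1 := by ring
      have hidx2 : (0 : ZMod h) - (((p : ℕ) + 1 : ℕ) : ZMod h)
          = (0 : ZMod h) - (p : ZMod h) - 1 := by push_cast; ring
      rw [hidx, h1, h3, hidx2, smul_smul, ← pow_succ]

end Main

/-- For an `h`-cyclic `A` in consecutive block form: every nonzero eigenvalue `λ` of `A`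
gives the nonzero eigenvalue `λ^h` of `B_1`; conversely if `μ ≠ 0` is an eigenvalue of `B_1`
and `λ^h = μ` then `λ` is an eigenvalue of `A`; in particular the nonzero spectrum of `A` is
closed under multiplication by `ω = exp(2πi/h)`. -/
theorem nonzero_spectrum_hcyclic {n h : ℕ} [NeZero h] (A : Matrix (Fin n) (Fin n) ℂ)
    (f : Fin n → ZMod h) (hcons : Monotone fun x : Fin n => (f x).val)
    (hA : IsHCyclic A f) :
    (∀ lam : ℂ, lam ≠ 0 → (∃ v, v ≠ 0 ∧ A *ᵥ v = lam • v) →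
      lam ^ h ≠ 0 ∧ ∃ w, w ≠ 0 ∧ Bone A f *ᵥ w = (lam ^ h) • w) ∧
    (∀ mu lam : ℂ, mu ≠ 0 → (∃ w, w ≠ 0 ∧ Bone A f *ᵥ w = mu • w) → lam ^ h = mu →
      ∃ v, v ≠ 0 ∧ A *ᵥ v = lam • v) ∧
    (∀ lam : ℂ, lam ≠ 0 → (∃ v, v ≠ 0 ∧ A *ᵥ v = lam • v) →
      ∃ v, v ≠ 0 ∧ A *ᵥ v = (lam * primRoot h) • v) := by
  have hcast0 : ((h : ℕ) : ZMod h) = 0 := ZMod.natCast_self h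
  refine ⟨?_, ?_, ?_⟩
  · -- Part 1
    rintro lam hlam ⟨v, hv0, hAv⟩
    refine ⟨pow_ne_zero h hlam, ?_⟩
    set w : {z : Fin n // f z = 0} → ℂ := fun b => v b.1 with hwdef
    have key := Bprod_eigen hA hAv (h := h) h
    have hBone : ∀ a : {z : Fin n // f z = 0},
        (Bone A f *ᵥ w) a = (Bprod A f 0 h *ᵥ Pmask f 0 v) a.1 := by
      intro a
      simp only [Bone, mulVec, dotProduct, Matrix.of_apply, Pmask, hwdef]
      rw [show (∑ y : Fin n, Bprod A f 0 h a.1 y * (if f y = 0 then v y else 0))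
          = ∑ y : Fin n, (if f y = 0 then Bprod A f 0 h a.1 y * v y else 0) from
        Finset.sum_congr rfl fun y _ => by split <;> simp]
      rw [← Finset.sum_filter]
      exact (Finset.sum_subtype _ (by simp) fun y => Bprod A f 0 h a.1 y * v y).symm
    have hwne : w ≠ 0 := by
      intro hw0
      apply hv0
      have hP0 : Pmask f 0 v = 0 := by
        funext x
        by_cases hx : f x = 0
        · have : w ⟨x, hx⟩ = 0 := congrFun hw0 _
          simpa [Pmask, hx, hwdef] using this
        · simp [Pmask, hx]
      have hall : ∀ p : ℕ, Pmask f ((0 : ZMod h) - ((p : ℕ) : ZMod h)) v = 0 := by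
        intro p
        induction p with
        | zero => simpa using hP0
        | succ p ih =>
            have h2 : (0 : ZMod h) - ((p : ℕ) : ZMod h)
                = ((0 : ZMod h) - (((p + 1 : ℕ) : ℕ) : ZMod h)) + 1 := by push_cast; ring
            have hs := star_lemma hA hAv ((0 : ZMod h) - (((p + 1 : ℕ) : ℕ) : ZMod h))
            rw [← h2, ih, Matrix.mulVec_zero] at hs
            rcases smul_eq_zero.mp hs.symm with hc | hc
            · exact absurd hc hlam
            · exact hc
      funext x
      have hfx : (0 : ZMod h) - ((((- f x).val : ℕ)) : ZMod h) = f x := by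
        rw [ZMod.natCast_rightInverse (- f x)]
        ring
      have := congrFun (hall ((- f x).val)) x
      rw [hfx] at this
      simpa [Pmask] using this
    refine ⟨w, hwne, ?_⟩
    funext a
    rw [hBone a, key]
    have : (0 : ZMod h) - ((h : ℕ) : ZMod h) = 0 := by rw [hcast0]; ring
    rw [this]
    simp [Pmask, a.2, hwdef]
  · -- Part 2
    rintro mu lam hmu ⟨w, hw0, hBw⟩ hlm
    have hlam : lam ≠ 0 := by
      rintro rfl
      rw [zero_pow (NeZero.ne h)] at hlm
      exact hmu hlm.symm
    set w' : Fin n → ℂ := fun x => if hx : f x = 0 then w ⟨x, hx⟩ else 0 with hw'def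
    have hw'supp : ∀ x, f x ≠ (0 : ZMod h) → w' x = 0 := by
      intro x hx; simp [hw'def, dif_neg hx]
    set u : ℕ → Fin n → ℂ := fun p => Bprod A f 0 p *ᵥ w' with hudef
    have hS : ∀ (p : ℕ) (x : Fin n), f x ≠ (0 : ZMod h) - ((p : ℕ) : ZMod h) → u p x = 0 :=
      Bprod_mulVec_support A f 0 w' hw'supp
    have hu0 : u 0 = w' := by rw [hudef]; simp [Bprod_zero, one_mulVec]
    have hstep : ∀ p : ℕ, A *ᵥ u p = u (p + 1) := by
      intro p
      rw [mulVec_eq_blockM A f hA ((0 : ZMod h) - ((p : ℕ) : ZMod h)) (u p) (hS p)]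
      rw [show u (p + 1) = blockM A f ((0 : ZMod h) - (((p : ℕ) : ZMod h) + 1)) *ᵥ u p from by
        rw [hudef]; simp only []; rw [Bprod_succ, ← mulVec_mulVec]]
      congr 2
      ring
    have huh : u h = mu • w' := by
      funext x
      by_cases hx : f x = 0
      · have h1 : u h x = (Bone A f *ᵥ w) ⟨x, hx⟩ := by
          simp only [hudef, Bone, mulVec, dotProduct, Matrix.of_apply]
          rw [show (∑ y : Fin n, Bprod A f 0 h x y * w' y)
              = ∑ y : Fin n, (if f y = 0 then Bprod A f 0 h x y * w' y else 0) from
            Finset.sum_congr rfl fun y _ => by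
              split
              · rfl
              · rw [hw'supp y (by assumption), mul_zero]]
          rw [← Finset.sum_filter]
          rw [Finset.sum_subtype (p := fun z : Fin n => f z = 0) _ (by simp)
            fun y => Bprod A f 0 h x y * w' y]
          apply Finset.sum_congr rfl
          intro b _
          congr 1
          simp [hw'def, dif_pos b.2]
        rw [h1, hBw]
        simp [hw'def, dif_pos hx]
      · rw [hS h x (by rw [hcast0, sub_zero]; exact hx)]
        simp [hw'def, dif_neg hx]
    obtain ⟨m, hm⟩ := Nat.exists_eq_succ_of_ne_zero (NeZero.ne h)
    have hm1 : h = m + 1 := hm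
    set v : Fin n → ℂ := ∑ p ∈ Finset.range h, lam ^ (h - 1 - p) • u p with hvdef
    have hAv : A *ᵥ v = lam • v := by
      have hsum : A *ᵥ v = ∑ p ∈ Finset.range h, lam ^ (h - 1 - p) • u (p + 1) := by
        rw [hvdef, ← Matrix.mulVecLin_apply, map_sum]
        apply Finset.sum_congr rfl
        intro p _
        rw [LinearMap.map_smul, Matrix.mulVecLin_apply, hstep p]
      have huh' : u (m + 1) = (lam ^ h) • u 0 := by rw [← hm1, huh, hu0, hlm]
      rw [hsum, hvdef, Finset.smul_sum, hm1]
      rw [Finset.sum_range_succ, Finset.sum_range_succ']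
      congr 1
      · apply Finset.sum_congr rfl
        intro p hp
        have hp' : p < m := Finset.mem_range.mp hp
        rw [smul_smul]
        congr 1
        have e1 : m + 1 - 1 - p = (m + 1 - 1 - (p + 1)) + 1 := by omega
        rw [e1, pow_succ]
        ring
      · have e2 : m + 1 - 1 - m = 0 := by omega
        have e3 : m + 1 - 1 - 0 = m := by omega
        rw [e2, e3, pow_zero, one_smul, huh', smul_smul]
        congr 1
        rw [hm1, pow_succ]
        ring
    refine ⟨v, ?_, hAv⟩
    obtain ⟨b, hb⟩ := Function.ne_iff.mp hw0
    intro hv0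
    apply hb
    have hvb := congrFun hv0 b.1
    rw [hvdef] at hvb
    simp only [Finset.sum_apply, Pi.smul_apply, smul_eq_mul, Pi.zero_apply] at hvb
    rw [Finset.sum_eq_single_of_mem 0 (Finset.mem_range.mpr (Nat.pos_of_ne_zero (NeZero.ne h)))]
      at hvb
    · rw [hu0] at hvb
      have hw'b : w' b.1 = w b := by simp [hw'def, dif_pos b.2]
      rw [hw'b] at hvb
      rcases mul_eq_zero.mp hvb with hc | hc
      · exact absurd hc (pow_ne_zero _ hlam)
      · exact hc
    · intro p hp hp0
      have hplt : p < h := Finset.mem_range.mp hp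
      have hpz : ((p : ℕ) : ZMod h) ≠ 0 := by
        rw [Ne, ZMod.natCast_eq_zero_iff]
        intro hdvd
        have := Nat.le_of_dvd (Nat.pos_of_ne_zero hp0) hdvd
        omega
      rw [hS p b.1 (by rw [b.2]; intro hc; rw [zero_sub] at hc; exact hpz (neg_eq_zero.mp hc.symm)), mul_zero]
  · -- Part 3
    rintro lam hlam ⟨v, hv0, hAv⟩
    set ω := primRoot h with hωdef
    have hω1 : ω ^ h = 1 := by
      rw [hωdef, primRoot, ← Complex.exp_nat_mul]
      have hh : (h : ℂ) ≠ 0 := Nat.cast_ne_zero.mpr (NeZero.ne h)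
      rw [show (h : ℂ) * (2 * Real.pi * Complex.I / h) = 2 * Real.pi * Complex.I from by
        field_simp]
      exact Complex.exp_two_pi_mul_I
    have hωne : ω ≠ 0 := Complex.exp_ne_zero _
    have hkey : ∀ ℓ : ZMod h, ω ^ (ℓ + 1).val = ω * ω ^ ℓ.val := by
      intro ℓ
      rw [ZMod.val_add, ZMod.val_one_eq_one_mod, ← pow_eq_pow_mod _ hω1, pow_add,
        ← pow_eq_pow_mod _ hω1, pow_one, mul_comm]
    refine ⟨fun x => ω ^ (f x).val * v x, ?_, ?_⟩
    · obtain ⟨x, hx⟩ := Function.ne_iff.mp hv0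
      intro hc
      apply hx
      have := congrFun hc x
      simp only [Pi.zero_apply] at this ⊢
      rcases mul_eq_zero.mp this with hc' | hc'
      · exact absurd hc' (pow_ne_zero _ hωne)
      · exact hc'
    · funext x
      simp only [mulVec, dotProduct, Pi.smul_apply, smul_eq_mul]
      rw [Finset.sum_congr rfl fun y (_ : y ∈ Finset.univ) =>
        show A x y * (ω ^ (f y).val * v y) = (ω * ω ^ (f x).val) * (A x y * v y) from by
          by_cases hAxy : A x y = 0
          · rw [hAxy, zero_mul, zero_mul, mul_zero]
          · rw [hA x y hAxy, hkey]; ring]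
      rw [← Finset.mul_sum]
      have hx := congrFun hAv x
      simp only [mulVec, dotProduct, Pi.smul_apply, smul_eq_mul] at hx
      rw [hx]
      ring
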